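/- Suppose additionally that y < sqrt(1 - (x - 1/2)^2) + sqrt(3)/2 (region R1_2). Let r = sqrt(x^2 + y^2) * sqrt((x-1)^2 + y^2) / (4y) and R = sqrt(16*r^2 - 1). Then the configuration p : Fin 2 -> R^2 given by p 0 = (0,0) and p 1 = (1/2, R/2) is a packing of 2 equal circles of radius r on the flat torus R^2/Lambda; that is, ||p i - p j + lambda|| >= 2r for all i, j in Fin 2 and all lambda in Lambda with (i ≠ j or lambda ≠ 0). -/

import Mathlib

noncomputable section

/-- The point `(a, b)` in the Euclidean plane. -/
def pt (a b : ℝ) : EuclideanSpace ℝ (Fin 2) :=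
  (WithLp.equiv 2 (Fin 2 → ℝ)).symm ![a, b]

/-- The lattice generated by `v1 = (1,0)` and `v2 = (x,y)`. -/
def TLat (x y : ℝ) : Set (EuclideanSpace ℝ (Fin 2)) :=
  {v | ∃ m n : ℤ, v = (m : ℝ) • pt 1 0 + (n : ℝ) • pt x y}

/-- `p` is a packing of `k` equal circles of radius `r` on the flat torus `ℝ²/Λ(x,y)`. -/
def IsPacking (x y : ℝ) {k : ℕ} (r : ℝ) (p : Fin k → EuclideanSpace ℝ (Fin 2)) : Prop :=
  ∀ i j : Fin k, ∀ l ∈ TLat x y, (i ≠ j ∨ l ≠ 0) → 2 * r ≤ ‖p i - p j + l‖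

/-!
`2 r` is the circumradius `ρ` of the triangle `0, (1,0), (x,y)` and `(1/2, R/2)` is its
circumcentre `c`. Since the basis `(1,0), (x,y)` is reduced (`0 ≤ 2⟪v₁, v₂⟫ ≤ ‖v₁‖² ≤ ‖v₂‖²`),
the triangle is Delaunay: no lattice point lies strictly inside its circumcircle, so every
translate of `c` is at distance at least `ρ` from every lattice point. The region condition gives
`ρ ≤ 1 = ‖v₁‖`, the minimal norm of the lattice, which separates the translates of
each centre from one another.
-/

open RealInnerProductSpace

theorem Int.one_le_sq_add_sq {m n : ℤ} (h : m ≠ 0 ∨ n ≠ 0) : 1 ≤ m ^ 2 + n ^ 2 := by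
  rcases h with h | h <;> nlinarith [Int.one_le_abs h, sq_abs m, sq_abs n]

theorem Int.one_le_sq_add_mul_add_sq {m n : ℤ} (h : m ≠ 0 ∨ n ≠ 0) :
    1 ≤ m ^ 2 + m * n + n ^ 2 := by
  nlinarith [Int.one_le_sq_add_sq h, sq_nonneg (m + n)]

theorem Int.sq_add_mul_add_sq_sub_nonneg (m n : ℤ) : 0 ≤ m ^ 2 + m * n + n ^ 2 - m - n := by
  rcases le_or_gt m 0 with hm | hm <;> rcases le_or_gt n 0 with hn | hn <;> nlinarith

section ReducedBasis

variable {E : Type*} [NormedAddCommGroup E] [InnerProductSpace ℝ E] {u v : E}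

theorem norm_smul_add_smul_sq (a b : ℝ) :
    ‖a • u + b • v‖ ^ 2 = a ^ 2 * ‖u‖ ^ 2 + 2 * a * b * ⟪u, v⟫ + b ^ 2 * ‖v‖ ^ 2 := by
  rw [norm_add_sq_real, norm_smul, norm_smul, inner_smul_left, inner_smul_right, mul_pow, mul_pow,
    Real.norm_eq_abs, Real.norm_eq_abs, sq_abs, sq_abs, conj_trivial]
  ring

variable (h0 : 0 ≤ ⟪u, v⟫) (h1 : 2 * ⟪u, v⟫ ≤ ‖u‖ ^ 2) (h2 : ‖u‖ ≤ ‖v‖)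
include h0 h1 h2

/- The cross term `2 m n ⟪u, v⟫` is nonnegative when `m n ≥ 0` and at least `m n ‖u‖²` otherwise. -/
theorem norm_le_norm_intCast_smul_add_smul {m n : ℤ} (hmn : m ≠ 0 ∨ n ≠ 0) :
    ‖u‖ ≤ ‖(m : ℝ) • u + (n : ℝ) • v‖ := by
  have hq₁ : (1 : ℝ) ≤ m ^ 2 + n ^ 2 := by exact_mod_cast Int.one_le_sq_add_sq hmn
  have hq₂ : (1 : ℝ) ≤ m ^ 2 + m * n + n ^ 2 := by exact_mod_cast Int.one_le_sq_add_mul_add_sq hmn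
  have huv : ‖u‖ ^ 2 ≤ ‖v‖ ^ 2 := by gcongr
  rw [← pow_le_pow_iff_left₀ (norm_nonneg _) (norm_nonneg _) two_ne_zero, norm_smul_add_smul_sq]
  rcases le_or_gt 0 ((m : ℝ) * n) with hs | hs
  · nlinarith [mul_nonneg hs h0]
  · nlinarith

/- `c` is the circumcentre of `0, u, v`, and
`‖m u + n v - c‖² - ‖c‖² = m (m - 1) ‖u‖² + 2 m n ⟪u, v⟫ + n (n - 1) ‖v‖²`. -/
theorem norm_le_norm_intCast_smul_add_smul_sub {c : E} (hu : 2 * ⟪u, c⟫ = ‖u‖ ^ 2)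
    (hv : 2 * ⟪v, c⟫ = ‖v‖ ^ 2) (m n : ℤ) :
    ‖c‖ ≤ ‖(m : ℝ) • u + (n : ℝ) • v - c‖ := by
  have hq : (0 : ℝ) ≤ m ^ 2 + m * n + n ^ 2 - m - n := by
    exact_mod_cast Int.sq_add_mul_add_sq_sub_nonneg m n
  have hm : (m : ℝ) ≤ m ^ 2 := by exact_mod_cast Int.le_self_sq m
  have hn : (n : ℝ) ≤ n ^ 2 := by exact_mod_cast Int.le_self_sq n
  have huv : ‖u‖ ^ 2 ≤ ‖v‖ ^ 2 := by gcongr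
  rw [← pow_le_pow_iff_left₀ (norm_nonneg _) (norm_nonneg _) two_ne_zero, norm_sub_sq_real,
    norm_smul_add_smul_sq, inner_add_left, inner_smul_left, inner_smul_left, conj_trivial,
    conj_trivial]
  rcases le_or_gt 0 ((m : ℝ) * n) with hs | hs
  · nlinarith [mul_nonneg hs h0]
  · nlinarith

end ReducedBasis

theorem pt_zero : pt 0 0 = 0 := by
  ext i; fin_cases i <;> simp [pt]

theorem inner_pt (a b c d : ℝ) : ⟪pt a b, pt c d⟫ = a * c + b * d := by
  simp only [pt, WithLp.equiv_symm_apply, PiLp.inner_apply, RCLike.inner_apply, Real.ringHom_apply,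
    Fin.sum_univ_two, Matrix.cons_val_zero, Matrix.cons_val_one]
  ring

theorem norm_pt_sq (a b : ℝ) : ‖pt a b‖ ^ 2 = a ^ 2 + b ^ 2 := by
  simp [pt, EuclideanSpace.norm_sq_eq, Fin.sum_univ_two]

theorem neg_mem_TLat {x y : ℝ} {l : EuclideanSpace ℝ (Fin 2)} (hl : l ∈ TLat x y) :
    -l ∈ TLat x y := by
  obtain ⟨m, n, rfl⟩ := hl
  exact ⟨-m, -n, by push_cast; simp only [neg_smul]; abel⟩

theorem isPacking_pair {x y r : ℝ} {p q : EuclideanSpace ℝ (Fin 2)}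
    (hlat : ∀ l ∈ TLat x y, l ≠ 0 → 2 * r ≤ ‖l‖) (hpq : ∀ l ∈ TLat x y, 2 * r ≤ ‖p - q + l‖) :
    IsPacking x y r ![p, q] := by
  intro i j l hl hij
  fin_cases i <;> fin_cases j
  · simpa using hlat l hl (by simpa using hij)
  · exact hpq l hl
  · calc 2 * r ≤ ‖p - q + -l‖ := hpq (-l) (neg_mem_TLat hl)
      _ = ‖q - p + l‖ := by rw [← norm_neg]; congr 1; abel
  · simpa using hlat l hl (by simpa using hij)

theorem sixteen_mul_sq_sqrt_mul_sqrt_div (x : ℝ) {y : ℝ} (hy : y ≠ 0) :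
    16 * (√(x ^ 2 + y ^ 2) * √((x - 1) ^ 2 + y ^ 2) / (4 * y)) ^ 2 =
      1 + ((x ^ 2 + y ^ 2 - x) / y) ^ 2 := by
  rw [div_pow, mul_pow, Real.sq_sqrt (by positivity), Real.sq_sqrt (by positivity)]
  field_simp
  ring

/- The conclusion says that `(x, y)` lies in the closed unit disc about `(1/2, √3/2)`. -/
theorem sq_add_sq_sub_le_sqrt_three_mul {x y : ℝ} (hx0 : 0 ≤ x) (hx1 : x ≤ 1) (hy : 0 ≤ y)
    (h : y < √(1 - (x - 1 / 2) ^ 2) + √3 / 2) : x ^ 2 + y ^ 2 - x ≤ √3 * y := by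
  have h3 : √3 ^ 2 = 3 := Real.sq_sqrt (by norm_num)
  rcases le_or_gt y (√3 / 2) with hy3 | hy3
  · nlinarith [Real.sqrt_nonneg 3]
  · have : (y - √3 / 2) ^ 2 < 1 - (x - 1 / 2) ^ 2 := (Real.lt_sqrt (by linarith)).1 (by linarith)
    nlinarith

namespace TorusPacking

variable {x y r R : ℝ} (hy : 0 < y) (hx : x ≤ x ^ 2 + y ^ 2)
  (hr : r = √(x ^ 2 + y ^ 2) * √((x - 1) ^ 2 + y ^ 2) / (4 * y)) (hR : R = √(16 * r ^ 2 - 1))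
include hy hx hr hR

theorem height_eq : R = (x ^ 2 + y ^ 2 - x) / y := by
  rw [hR, hr, sixteen_mul_sq_sqrt_mul_sqrt_div x hy.ne', add_sub_cancel_left,
    Real.sqrt_sq (div_nonneg (by linarith) hy.le)]

theorem norm_centre : ‖pt (1 / 2) (R / 2)‖ = 2 * r := by
  have hr0 : 0 ≤ r := by rw [hr]; positivity
  have h16 := sixteen_mul_sq_sqrt_mul_sqrt_div x hy.ne'
  rw [← sq_eq_sq₀ (norm_nonneg _) (by positivity), norm_pt_sq, height_eq hy hx hr hR, hr]
  linear_combination -h16 / 4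

theorem two_mul_inner_centre : 2 * ⟪pt x y, pt (1 / 2) (R / 2)⟫ = ‖pt x y‖ ^ 2 := by
  rw [inner_pt, norm_pt_sq, height_eq hy hx hr hR]
  field_simp
  ring

theorem norm_centre_le_one (hx0 : 0 ≤ x) (hx1 : x ≤ 1)
    (hreg : y < √(1 - (x - 1 / 2) ^ 2) + √3 / 2) : ‖pt (1 / 2) (R / 2)‖ ≤ 1 := by
  have hR0 : 0 ≤ R := by rw [height_eq hy hx hr hR]; exact div_nonneg (by linarith) hy.le
  have hR3 : R ≤ √3 := by
    rw [height_eq hy hx hr hR, div_le_iff₀ hy]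
    exact sq_add_sq_sub_le_sqrt_three_mul hx0 hx1 hy.le hreg
  have hRsq : R ^ 2 ≤ 3 := by
    calc R ^ 2 ≤ √3 ^ 2 := pow_le_pow_left₀ hR0 hR3 2
      _ = 3 := Real.sq_sqrt (by norm_num)
  rw [← sq_le_one_iff₀ (norm_nonneg _), norm_pt_sq]
  linarith

end TorusPacking

theorem two_circles_packing_R1 (x y : ℝ) (hxy : 1 ≤ x ^ 2 + y ^ 2) (hy : 0 < y) (hx0 : 0 ≤ x) (hx1 : x ≤ 1 / 2)
    (hreg : y < Real.sqrt (1 - (x - 1 / 2) ^ 2) + Real.sqrt 3 / 2)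
    (r R : ℝ) (hr : r = Real.sqrt (x ^ 2 + y ^ 2) * Real.sqrt ((x - 1) ^ 2 + y ^ 2) / (4 * y))
    (hR : R = Real.sqrt (16 * r ^ 2 - 1))
    : IsPacking x y r ![pt 0 0, pt (1 / 2) (R / 2)] := by
  have hx : x ≤ x ^ 2 + y ^ 2 := by linarith
  have hc := TorusPacking.norm_centre hy hx hr hR
  have hc1 := TorusPacking.norm_centre_le_one hy hx hr hR hx0 (by linarith) hreg
  have hu : ‖pt 1 0‖ = 1 := by simp [pt, EuclideanSpace.norm_eq]
  have h0 : 0 ≤ ⟪pt 1 0, pt x y⟫ := by rw [inner_pt]; linarith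
  have h1 : 2 * ⟪pt 1 0, pt x y⟫ ≤ ‖pt 1 0‖ ^ 2 := by rw [inner_pt, hu]; linarith
  have h2 : ‖pt 1 0‖ ≤ ‖pt x y‖ := by
    rw [← sq_le_sq₀ (norm_nonneg _) (norm_nonneg _), hu, norm_pt_sq]; simpa using hxy
  refine isPacking_pair ?_ ?_
  · rintro _ ⟨m, n, rfl⟩ hl
    have hmn : m ≠ 0 ∨ n ≠ 0 := by
      by_contra! h
      simp [h.1, h.2] at hl
    calc 2 * r ≤ ‖pt 1 0‖ := by rw [hu, ← hc]; exact hc1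
      _ ≤ _ := norm_le_norm_intCast_smul_add_smul h0 h1 h2 hmn
  · rintro _ ⟨m, n, rfl⟩
    rw [pt_zero, zero_sub, neg_add_eq_sub, ← hc]
    refine norm_le_norm_intCast_smul_add_smul_sub h0 h1 h2 ?_
      (TorusPacking.two_mul_inner_centre hy hx hr hR) m n
    rw [inner_pt, hu]
    ring
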